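/- arXiv:1306.4548 — 4 statements merged into one kernel-verified Lean document; each statement's English description precedes it below -/
import Mathlib

section
/- Let F : [0,∞) → ℝ be three times differentiable and satisfy (d/dt + λ)[(d/dt + η)² + ν] F(t) ≤ 0 for all t ≥ 0, where λ > 0 and ν ≤ 0 is a constant. Let φ be the solution of [(d/dt + η)² + ν] φ(t) = C₀ e^{-λ t} with φ(0) = F(0), φ'(0) = F'(0), where C₀ = F''(0) + 2η F'(0) + (η² + ν) F(0). Then F(t) ≤ φ(t) for all t ≥ 0. -/
/-! Both operators factor into first-order pieces with real coefficients: `d/dt + λ`, and,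
because `ν ≤ 0`, `(d/dt + η)² + ν = (d/dt + η - s)(d/dt + η + s)` with `s = √(-ν)`. For a
first-order piece, `f' + c f ≤ 0` on `[0,∞)` with `f 0 ≤ 0` forces `f ≤ 0`, since `e^{ct} f` is
antitone. Applied to `d/dt + λ` and `H = [(d/dt + η)² + ν] F - C₀ e^{-λt}`, which vanishes at `0`
by the choice of `C₀`, this gives `[(d/dt + η)² + ν] (F - φ) = H ≤ 0`. Peeling off the two
remaining factors, using `(F - φ)(0) = (F - φ)'(0) = 0`, gives `F - φ ≤ 0`. -/

open Set Real

theorem ContDiff.hasDerivAt_iteratedDeriv {𝕜 E : Type*} [NontriviallyNormedField 𝕜]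
    [NormedAddCommGroup E] [NormedSpace 𝕜 E] {f : 𝕜 → E} {n : WithTop ℕ∞} (hf : ContDiff 𝕜 n f)
    {m : ℕ} (hm : m < n) (x : 𝕜) :
    HasDerivAt (iteratedDeriv m f) (iteratedDeriv (m + 1) f x) x := by
  rw [iteratedDeriv_succ]
  exact (hf.differentiable_iteratedDeriv m hm x).hasDerivAt

theorem nonpos_of_deriv_add_mul_nonpos {f f' : ℝ → ℝ} {c : ℝ}
    (hf : ∀ t ≥ 0, HasDerivWithinAt f (f' t) (Ici 0) t) (h0 : f 0 ≤ 0)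
    (h : ∀ t ≥ 0, f' t + c * f t ≤ 0) : ∀ t ≥ 0, f t ≤ 0 := by
  have hg : ∀ t ≥ 0, HasDerivWithinAt (fun t => exp (c * t) * f t)
      (exp (c * t) * (f' t + c * f t)) (Ici 0) t := fun t ht => by
    have he := ((hasDerivAt_id' t).const_mul c).exp.hasDerivWithinAt (s := Ici 0)
    exact (he.fun_mul (hf t ht)).congr_deriv (by ring)
  have hanti : AntitoneOn (fun t => exp (c * t) * f t) (Ici 0) := by
    refine antitoneOn_of_hasDerivWithinAt_nonpos (f' := fun t => exp (c * t) * (f' t + c * f t))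
      (convex_Ici 0)
      (fun t ht => (hg t ht).continuousWithinAt) (fun t ht => ?_) (fun t ht => ?_) <;>
      rw [interior_Ici] at *
    · exact (hg t ht.le).mono Ioi_subset_Ici_self
    · exact mul_nonpos_of_nonneg_of_nonpos (exp_pos _).le (h t ht.le)
  intro t ht
  have : exp (c * t) * f t ≤ f 0 := by
    simpa using hanti self_mem_Ici ht ht
  exact nonpos_of_mul_nonpos_right (this.trans h0) (exp_pos _)

theorem nonpos_of_factored_second_order_nonpos {g g' g'' : ℝ → ℝ} {p q : ℝ}
    (hg : ∀ t ≥ 0, HasDerivWithinAt g (g' t) (Ici 0) t)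
    (hg' : ∀ t ≥ 0, HasDerivWithinAt g' (g'' t) (Ici 0) t)
    (h0 : g 0 = 0) (h0' : g' 0 ≤ 0)
    (h : ∀ t ≥ 0, g'' t + (p + q) * g' t + p * q * g t ≤ 0) : ∀ t ≥ 0, g t ≤ 0 := by
  have hw : ∀ t ≥ 0, g' t + q * g t ≤ 0 :=
    nonpos_of_deriv_add_mul_nonpos (c := p) (fun t ht => (hg' t ht).add ((hg t ht).const_mul q))
      (by simpa [h0] using h0') (fun t ht => by linarith [h t ht])
  exact nonpos_of_deriv_add_mul_nonpos hg h0.le hw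

theorem stmt0_general (F φ : ℝ → ℝ) (lam η ν C₀ : ℝ)
    (hν : ν ≤ 0)
    (hF : ContDiff ℝ 3 F) (hφ : ContDiff ℝ 2 φ)
    (hineq : ∀ t ≥ (0 : ℝ),
      iteratedDeriv 3 F t + (lam + 2 * η) * iteratedDeriv 2 F t
        + (η ^ 2 + ν + 2 * lam * η) * deriv F t + lam * (η ^ 2 + ν) * F t ≤ 0)
    (hC₀ : C₀ = iteratedDeriv 2 F 0 + 2 * η * deriv F 0 + (η ^ 2 + ν) * F 0)
    (hφode : ∀ t ≥ (0 : ℝ),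
      iteratedDeriv 2 φ t + 2 * η * deriv φ t + (η ^ 2 + ν) * φ t
        = C₀ * Real.exp (-lam * t))
    (hφ0 : φ 0 = F 0) (hφ'0 : deriv φ 0 = deriv F 0) :
    ∀ t ≥ (0 : ℝ), F t ≤ φ t := by
  have hF₁ := hF.hasDerivAt_iteratedDeriv (m := 0) (by norm_num)
  have hF₂ := hF.hasDerivAt_iteratedDeriv (m := 1) (by norm_num)
  have hF₃ := hF.hasDerivAt_iteratedDeriv (m := 2) (by norm_num)
  have hφ₁ := hφ.hasDerivAt_iteratedDeriv (m := 0) (by norm_num)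
  have hφ₂ := hφ.hasDerivAt_iteratedDeriv (m := 1) (by norm_num)
  simp only [iteratedDeriv_zero, zero_add, iteratedDeriv_one, Nat.reduceAdd] at hF₁ hF₂ hF₃ hφ₁ hφ₂
  have hexp (t : ℝ) : HasDerivAt (fun t => C₀ * exp (-lam * t)) (-lam * (C₀ * exp (-lam * t))) t :=
    (((hasDerivAt_id' t).const_mul (-lam)).exp.const_mul C₀).congr_deriv (by ring)
  have hH : ∀ t ≥ 0, iteratedDeriv 2 F t + 2 * η * deriv F t + (η ^ 2 + ν) * F t
      - C₀ * exp (-lam * t) ≤ 0 :=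
    nonpos_of_deriv_add_mul_nonpos (c := lam)
      (fun t _ => ((((hF₃ t).add ((hF₂ t).const_mul (2 * η))).add
        ((hF₁ t).const_mul (η ^ 2 + ν))).sub (hexp t)).hasDerivWithinAt)
      (by simp [hC₀]) (fun t ht => by linear_combination hineq t ht)
  set s := √(-ν)
  have hs : (η - s) * (η + s) = η ^ 2 + ν := by
    linear_combination -sq_sqrt (neg_nonneg.mpr hν)
  intro t ht
  have := nonpos_of_factored_second_order_nonpos (g := fun t => F t - φ t) (p := η - s) (q := η + s)
    (fun t _ => ((hF₁ t).sub (hφ₁ t)).hasDerivWithinAt)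
    (fun t _ => ((hF₂ t).sub (hφ₂ t)).hasDerivWithinAt)
    (by simp [hφ0]) (by simp [hφ'0])
    (fun t ht => by rw [hs]; linear_combination hH t ht - hφode t ht) t ht
  simpa [sub_nonpos] using this

/-- If `F` is C³ on `[0,∞)` and satisfies
`(∂_t + λ)[(∂_t + η)² + ν] F ≤ 0` with `λ > 0`, `ν ≤ 0`, and `φ` solves
`[(∂_t + η)² + ν] φ = C₀ e^{-λt}` with `φ(0) = F(0)`, `φ'(0) = F'(0)` where
`C₀ = F''(0) + 2η F'(0) + (η² + ν) F(0)`, then `F ≤ φ` on `[0,∞)`. -/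
theorem stmt0 (F φ : ℝ → ℝ) (lam η ν C₀ : ℝ)
    (hlam : 0 < lam) (hν : ν ≤ 0)
    (hF : ContDiff ℝ 3 F) (hφ : ContDiff ℝ 2 φ)
    (hineq : ∀ t ≥ (0 : ℝ),
      iteratedDeriv 3 F t + (lam + 2 * η) * iteratedDeriv 2 F t
        + (η ^ 2 + ν + 2 * lam * η) * deriv F t + lam * (η ^ 2 + ν) * F t ≤ 0)
    (hC₀ : C₀ = iteratedDeriv 2 F 0 + 2 * η * deriv F 0 + (η ^ 2 + ν) * F 0)
    (hφode : ∀ t ≥ (0 : ℝ),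
      iteratedDeriv 2 φ t + 2 * η * deriv φ t + (η ^ 2 + ν) * φ t
        = C₀ * Real.exp (-lam * t))
    (hφ0 : φ 0 = F 0) (hφ'0 : deriv φ 0 = deriv F 0) :
    ∀ t ≥ (0 : ℝ), F t ≤ φ t :=
  stmt0_general F φ lam η ν C₀ hν hF hφ hineq hC₀ hφode hφ0 hφ'0
end

section
/- Let g : [0,∞) → ℝ be twice differentiable with g'' (t) + ν g(t) ≤ 0 for all t, where ν > 0, and g(0) = g'(0) = 0. Define M(t) = sup{-g(s) : 0 ≤ s ≤ t}. Then g(t) ≤ M(t) for all t ≥ 0. -/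
/-!
Sturm comparison with `sin (√ν (t - s))`. For fixed `t` the Wronskian-type quantity
`W s = g' s * sin (l (t - s)) + l * g s * cos (l (t - s))`, `l = √ν`, has derivative
`(g'' s + ν g s) * sin (l (t - s))`, which is `≤ 0` while `l (t - s) ∈ [0, π]`. Hence `W` decreases
on `[max 0 (t - π / l), t]`, and `W t = l * g t`. If `t ≤ π / l` the left end is `0`, where `W`
vanishes, so `g t ≤ 0 = -g 0`; otherwise it is `a = t - π / l`, where `W a = -l * g a`, so
`g t ≤ -g a`.
-/

open Real Set

lemma hasDerivAt_sin_wronskian {g g' : ℝ → ℝ} {g'' l t s : ℝ}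
    (hg : HasDerivAt g (g' s) s) (hg' : HasDerivAt g' g'' s) :
    HasDerivAt (fun s => g' s * sin (l * (t - s)) + l * g s * cos (l * (t - s)))
      ((g'' + l ^ 2 * g s) * sin (l * (t - s))) s := by
  have harg : HasDerivAt (fun s => l * (t - s)) (-l) s := by
    simpa using ((hasDerivAt_id s).const_sub t).const_mul l
  have hsin := (hasDerivAt_sin _).comp s harg
  have hcos := (hasDerivAt_cos _).comp s harg
  refine ((hg'.mul hsin).add ((hg.const_mul l).mul hcos)).congr_deriv ?_
  simp only [Function.comp_apply]
  ring

lemma mul_le_sin_wronskian {g g' g'' : ℝ → ℝ} {l a t : ℝ} (hl : 0 ≤ l) (hat : a ≤ t)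
    (hπ : l * (t - a) ≤ π) (hg : ∀ s, HasDerivAt g (g' s) s)
    (hg' : ∀ s, HasDerivAt g' (g'' s) s) (hineq : ∀ s ∈ Icc a t, g'' s + l ^ 2 * g s ≤ 0) :
    l * g t ≤ g' a * sin (l * (t - a)) + l * g a * cos (l * (t - a)) := by
  set W := fun s => g' s * sin (l * (t - s)) + l * g s * cos (l * (t - s))
  have hW s : HasDerivAt W ((g'' s + l ^ 2 * g s) * sin (l * (t - s))) s :=
    hasDerivAt_sin_wronskian (hg s) (hg' s)
  have hanti : AntitoneOn W (Icc a t) := by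
    refine antitoneOn_of_deriv_nonpos (convex_Icc a t)
      (fun s _ => (hW s).continuousAt.continuousWithinAt)
      (fun s _ => (hW s).differentiableAt.differentiableWithinAt) fun s hs => ?_
    rw [interior_Icc] at hs
    rw [(hW s).deriv]
    refine mul_nonpos_of_nonpos_of_nonneg (hineq s (Ioo_subset_Icc_self hs))
      (sin_nonneg_of_nonneg_of_le_pi (mul_nonneg hl (by linarith [hs.2])) ?_)
    nlinarith [hs.1]
  simpa [W] using hanti (left_mem_Icc.2 hat) (right_mem_Icc.2 hat) hat

lemma exists_le_neg_of_deriv_deriv_add_mul_nonpos {g : ℝ → ℝ} {ν : ℝ} (hν : 0 < ν)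
    (hg : ∀ s, HasDerivAt g (deriv g s) s)
    (hg' : ∀ s, HasDerivAt (deriv g) (deriv (deriv g) s) s)
    (hineq : ∀ s ≥ 0, deriv (deriv g) s + ν * g s ≤ 0) (hg0 : g 0 = 0) (hg'0 : deriv g 0 = 0)
    {t : ℝ} (ht : 0 ≤ t) : ∃ s ∈ Icc 0 t, g t ≤ -g s := by
  set l := √ν
  have hl : 0 < l := sqrt_pos.2 hν
  have hineq' (a : ℝ) (ha : 0 ≤ a) : ∀ s ∈ Icc a t, deriv (deriv g) s + l ^ 2 * g s ≤ 0 :=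
    fun s hs => by simpa [l, sq_sqrt hν.le] using hineq s (ha.trans hs.1)
  rcases le_or_gt (l * t) π with hsmall | hlarge
  · have h := mul_le_sin_wronskian hl.le ht (by simpa using hsmall) hg hg' (hineq' 0 le_rfl)
    simp only [hg0, hg'0, zero_mul, mul_zero, zero_add] at h
    exact ⟨0, left_mem_Icc.2 ht, by
      rw [hg0, neg_zero]; exact nonpos_of_mul_nonpos_right h hl⟩
  · set a := t - π / l
    have hlt : l * (t - a) = π := by simp only [a]; field_simp; ring
    have ha : 0 ≤ a := by
      simp only [a, sub_nonneg]; rw [div_le_iff₀ hl]; linarith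
    have hat : a ≤ t := by simp only [a]; linarith [div_pos pi_pos hl]
    have h := mul_le_sin_wronskian hl.le hat hlt.le hg hg' (hineq' a ha)
    rw [hlt, sin_pi, cos_pi] at h
    exact ⟨a, ⟨ha, hat⟩, le_of_mul_le_mul_left (by linarith) hl⟩

/-- If `g` is C² with `g'' + ν g ≤ 0` on `[0,∞)`, `ν > 0`,
`g(0) = g'(0) = 0`, and `M(t) = sup {-g(s) : 0 ≤ s ≤ t}`, then `g(t) ≤ M(t)`. -/
theorem stmt1 (g : ℝ → ℝ) (ν : ℝ) (hν : 0 < ν)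
    (hg : ContDiff ℝ 2 g)
    (hineq : ∀ t ≥ (0 : ℝ), iteratedDeriv 2 g t + ν * g t ≤ 0)
    (hg0 : g 0 = 0) (hg'0 : deriv g 0 = 0) :
    ∀ t ≥ (0 : ℝ), g t ≤ sSup ((fun s => -g s) '' Set.Icc 0 t) := by
  intro t ht
  have hdg : ContDiff ℝ 1 (deriv g) := hg.iterate_deriv' 1 1
  obtain ⟨s, hs, hgs⟩ := exists_le_neg_of_deriv_deriv_add_mul_nonpos hν
    (fun s => (hg.differentiable two_ne_zero s).hasDerivAt)
    (fun s => (hdg.differentiable one_ne_zero s).hasDerivAt)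
    (by simpa only [iteratedDeriv_succ, iteratedDeriv_zero] using hineq) hg0 hg'0 ht
  have hbdd : BddAbove ((fun s => -g s) '' Icc 0 t) :=
    (isCompact_Icc.image (hg.continuous.neg)).bddAbove
  exact hgs.trans (le_csSup hbdd ⟨s, hs, rfl⟩)
end

section
/- Under the same setting (L = K + R - R*, K self-adjoint, ∂_t f_t = L f_t, F(t) = ‖f_t‖²), the third derivative satisfies F'''(t) = ⟨(2K)³ f_t, f_t⟩ + 12⟨[K², R] f_t, f_t⟩ + 4⟨[[K,R], R - R*] f_t, f_t⟩. -/
/-!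
Since `f' = L f`, the derivative of `t ↦ ⟪A f t, f t⟫` is the quadratic form of
`A L + L* A`. Hence `F⁽ⁿ⁾(t)` is the quadratic form of the `n`-th iterate of `X ↦ X L + L* X`
applied to `1`. For `n = 3` this iterate is expanded in the star ring of operators using
`K* = K`, and the star-parts are absorbed because `⟪X* x, x⟫ = ⟪X x, x⟫` over `ℝ`.
-/

open scoped RealInnerProductSpace

def lyapunovMap {A : Type*} [Mul A] [Add A] [Star A] (L X : A) : A := X * L + star L * X

section StarRing

variable {A : Type*} [Ring A] [StarRing A]

theorem lyapunovMap_iterate_three_one {K : A} (hK : IsSelfAdjoint K) (R : A) :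
    (lyapunovMap (K + R - star R))^[3] 1
      = (2 * K) ^ 3 + 6 * ((K * K * R - R * (K * K)) + star (K * K * R - R * (K * K)))
        + 2 * (((K * R - R * K) * (R - star R) - (R - star R) * (K * R - R * K))
          + star ((K * R - R * K) * (R - star R) - (R - star R) * (K * R - R * K))) := by
  simp only [Function.iterate_succ, Function.comp, Function.iterate_zero, id, lyapunovMap,
    star_add, star_sub, star_mul, star_star, hK.star_eq]
  noncomm_ring

end StarRing

section InnerProductSpace

variable {H : Type*} [NormedAddCommGroup H] [InnerProductSpace ℝ H] [CompleteSpace H]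

theorem inner_star_apply_self (X : H →L[ℝ] H) (x : H) : ⟪(star X) x, x⟫ = ⟪X x, x⟫ := by
  rw [ContinuousLinearMap.star_eq_adjoint, ContinuousLinearMap.adjoint_inner_left, real_inner_comm]

variable {L : H →L[ℝ] H} {f : ℝ → H}

theorem hasDerivAt_inner_apply_self (hf : ∀ t, HasDerivAt f (L (f t)) t) (A : H →L[ℝ] H)
    (t : ℝ) : HasDerivAt (fun s => ⟪A (f s), f s⟫) ⟪lyapunovMap L A (f t), f t⟫ t := by
  refine ((A.hasFDerivAt.comp_hasDerivAt t (hf t)).inner ℝ (hf t)).congr_deriv ?_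
  rw [lyapunovMap, add_apply, inner_add_left, add_comm, ContinuousLinearMap.star_eq_adjoint,
    mul_apply_eq_comp, mul_apply_eq_comp, ContinuousLinearMap.adjoint_inner_left]
  rfl

theorem iteratedDeriv_inner_apply_self (hf : ∀ t, HasDerivAt f (L (f t)) t) (n : ℕ)
    (A : H →L[ℝ] H) :
    iteratedDeriv n (fun s => ⟪A (f s), f s⟫)
      = fun s => ⟪((lyapunovMap L)^[n] A) (f s), f s⟫ := by
  induction n generalizing A with
  | zero => rfl
  | succ n ih =>
    rw [iteratedDeriv_succ', funext fun t => (hasDerivAt_inner_apply_self hf A t).deriv, ih,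
      Function.iterate_succ_apply]

end InnerProductSpace

/-- with `L = K + R - R*`, `K` self-adjoint, `∂_t f_t = L f_t`
and `F(t) = ‖f_t‖²`, one has
`F''' = ⟨(2K)³ f, f⟩ + 12⟨[K²,R] f, f⟩ + 4⟨[[K,R],R-R*] f, f⟩`. -/
theorem stmt6 {H : Type*} [NormedAddCommGroup H] [InnerProductSpace ℝ H]
    [CompleteSpace H]
    (K R : H →L[ℝ] H) (hK : ContinuousLinearMap.adjoint K = K)
    (f : ℝ → H)
    (hf : ∀ t, HasDerivAt f ((K + R - ContinuousLinearMap.adjoint R) (f t)) t)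
    (F : ℝ → ℝ) (hF : F = fun t => ‖f t‖ ^ 2) :
    ∀ t : ℝ,
      iteratedDeriv 3 F t
        = (inner ℝ ((((2 : ℝ) • K) ^ 3) (f t)) (f t) : ℝ)
          + 12 * (inner ℝ ((K * K * R - R * (K * K)) (f t)) (f t) : ℝ)
          + 4 * (inner ℝ (((K * R - R * K) * (R - ContinuousLinearMap.adjoint R)
              - (R - ContinuousLinearMap.adjoint R) * (K * R - R * K)) (f t)) (f t) : ℝ) := by
  intro t
  rw [← ContinuousLinearMap.star_eq_adjoint] at hK hf ⊢
  have hF1 : F = fun s => ⟪(1 : H →L[ℝ] H) (f s), f s⟫ := by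
    simp only [hF, one_apply_eq_self, real_inner_self_eq_norm_sq]
  rw [hF1, iteratedDeriv_inner_apply_self hf, lyapunovMap_iterate_three_one hK, two_smul,
    ← two_mul]
  simp only [add_apply, mul_apply_eq_comp, ContinuousLinearMap.ofNat_apply,
    ← Nat.cast_smul_eq_nsmul ℝ, real_inner_smul_left, inner_add_left, inner_star_apply_self]
  ring
end

section
/- The measure μ = e^{-U(x)}dx ⊗ ½(δ₁ + δ_{-1})(dy), with U'(x) = a(x,1) - a(x,-1), is invariant for the generator L f(x,y) = y ∂_x f(x,y) + a(x,y)(f(x,-y) - f(x,y)): for all smooth compactly supported f, ∫∫ Lf dμ = 0. -/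
open MeasureTheory

/-- the measure `μ = e^{-U(x)}dx ⊗ ½(δ₁+δ_{-1})(dy)` with
`U' = a(·,1) - a(·,-1)` is invariant for the telegraph generator
`Lf(x,y) = y ∂_x f(x,y) + a(x,y)(f(x,-y) - f(x,y))`: for all smooth
compactly supported `f`, `∫∫ Lf dμ = 0`. -/
theorem stmt11 (a : ℝ → ℝ → ℝ) (U : ℝ → ℝ) (f : ℝ → ℝ → ℝ)
    (ha : ∀ y ∈ ({1, -1} : Set ℝ),
      ContDiff ℝ (⊤ : ℕ∞) (fun x => a x y) ∧ ∀ x, 0 < a x y)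
    (hU : ∀ x, U x = ∫ z in (0 : ℝ)..x, (a z 1 - a z (-1)))
    (hf : ∀ y ∈ ({1, -1} : Set ℝ),
      ContDiff ℝ (⊤ : ℕ∞) (fun x => f x y) ∧ HasCompactSupport (fun x => f x y)) :
    ∫ x : ℝ,
      ((1 * deriv (fun x' => f x' 1) x + a x 1 * (f x (-1) - f x 1))
        + ((-1) * deriv (fun x' => f x' (-1)) x + a x (-1) * (f x 1 - f x (-1))))
        * Real.exp (-U x) = 0 := by
  obtain ⟨ha1, -⟩ := ha 1 (by simp)
  obtain ⟨ha2, -⟩ := ha (-1) (by simp)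
  obtain ⟨hf1, hc1⟩ := hf 1 (by simp)
  obtain ⟨hf2, hc2⟩ := hf (-1) (by simp)
  set b : ℝ → ℝ := fun x => a x 1 - a x (-1) with hb
  have hbc : Continuous b := (ha1.continuous).sub (ha2.continuous)
  -- derivative of U
  have hUd : ∀ x, HasDerivAt U (b x) x := by
    intro x
    have : HasDerivAt (fun u => ∫ z in (0:ℝ)..u, b z) (b x) x :=
      intervalIntegral.integral_hasDerivAt_right
        (hbc.intervalIntegrable 0 x)
        (hbc.stronglyMeasurableAtFilter _ _) hbc.continuousAt
    exact this.congr_of_eventuallyEq (Filter.Eventually.of_forall fun u => hU u)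
  have hUc1 : ContDiff ℝ 1 U := by
    rw [contDiff_one_iff_deriv]
    refine ⟨fun x => (hUd x).differentiableAt, ?_⟩
    have : deriv U = b := funext fun x => (hUd x).deriv
    rw [this]; exact hbc
  -- the function F
  set F : ℝ → ℝ := fun x => (f x 1 - f x (-1)) * Real.exp (-U x) with hF
  have hFc : ContDiff ℝ 1 F :=
    ((hf1.sub hf2).of_le (by simp)).mul ((Real.contDiff_exp.of_le le_top).comp hUc1.neg)
  have hg : HasCompactSupport (fun x => f x 1 - f x (-1)) := by
    simp only [sub_eq_add_neg]; exact hc1.add hc2.neg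
  have hFs : HasCompactSupport F := hg.mul_right
  have hFd : ∀ x, HasDerivAt F
      ((deriv (fun x' => f x' 1) x - deriv (fun x' => f x' (-1)) x) * Real.exp (-U x)
        + (f x 1 - f x (-1)) * (Real.exp (-U x) * (-b x))) x := by
    intro x
    have h1 : HasDerivAt (fun x' => f x' 1) (deriv (fun x' => f x' 1) x) x :=
      (hf1.differentiable (by simp) x).hasDerivAt
    have h2 : HasDerivAt (fun x' => f x' (-1)) (deriv (fun x' => f x' (-1)) x) x :=
      (hf2.differentiable (by simp) x).hasDerivAt
    have hE : HasDerivAt (fun x' => Real.exp (-U x')) (Real.exp (-U x) * (-b x)) x :=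
      ((hUd x).neg).exp
    exact (h1.sub h2).mul hE
  have hderiv : ∀ x, deriv F x =
      (deriv (fun x' => f x' 1) x - deriv (fun x' => f x' (-1)) x) * Real.exp (-U x)
        + (f x 1 - f x (-1)) * (Real.exp (-U x) * (-b x)) :=
    fun x => (hFd x).deriv
  have key : ∀ x,
      ((1 * deriv (fun x' => f x' 1) x + a x 1 * (f x (-1) - f x 1))
        + ((-1) * deriv (fun x' => f x' (-1)) x + a x (-1) * (f x 1 - f x (-1))))
        * Real.exp (-U x) = deriv F x := by
    intro x; rw [hderiv x, hb]; ring
  calc ∫ x : ℝ,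
      ((1 * deriv (fun x' => f x' 1) x + a x 1 * (f x (-1) - f x 1))
        + ((-1) * deriv (fun x' => f x' (-1)) x + a x (-1) * (f x 1 - f x (-1))))
        * Real.exp (-U x)
      = ∫ x : ℝ, deriv F x := by simp_rw [key]
    _ = (∫ x in Set.Iic (0:ℝ), deriv F x) + ∫ x in Set.Ioi (0:ℝ), deriv F x := by
        rw [intervalIntegral.integral_Iic_add_Ioi] <;>
          exact ((hFc.continuous_deriv le_rfl).integrable_of_hasCompactSupport
            hFs.deriv).integrableOn
    _ = F 0 + -F 0 := by
        rw [hFs.integral_Iic_deriv_eq hFc, hFs.integral_Ioi_deriv_eq hFc]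
    _ = 0 := by ring
end
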